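/- Let t₀ ≥ 0 and let G : [t₀,∞) → 𝕂ⁿ be a continuous function with G(t₀) = 0. For every M¹ initial datum (φ,ξ) there exists exactly one function x : [t₀-r,∞) → 𝕂ⁿ such that x(t₀+θ) = φ(θ) for θ ∈ [-r,0), x(t₀) = ξ, x is continuous on [t₀,∞), and x(t) = ξ + L(θ ↦ ∫_{t₀+θ}^{t+θ} x(s) ds) + G(t) for all t ≥ t₀. -/

import Mathlib

open MeasureTheory

/-- `x : ℝ → 𝕂ⁿ` (regarded as a function on `[t₀-r,∞)`) solves the integral equation
`x(t) = ξ + L(θ ↦ ∫_{t₀+θ}^{t+θ} x(s) ds) + G(t)` for `t ≥ t₀`, with history `φ` on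
`[t₀-r,t₀)` and value `ξ` at `t₀`. -/
def IsSolFrom {𝕜 : Type*} [RCLike 𝕜] {n : ℕ} (r : ℝ)
    (L : C(Set.Icc (-r) (0:ℝ), Fin n → 𝕜) →L[𝕜] (Fin n → 𝕜)) (t₀ : ℝ)
    (φ : ℝ → Fin n → 𝕜) (ξ : Fin n → 𝕜) (G : ℝ → Fin n → 𝕜)
    (x : ℝ → Fin n → 𝕜) : Prop :=
  (∀ θ ∈ Set.Ico (-r) (0:ℝ), x (t₀ + θ) = φ θ) ∧ x t₀ = ξ ∧
  ContinuousOn x (Set.Ici t₀) ∧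
  ∀ t, t₀ ≤ t → ∃ ψ : C(Set.Icc (-r) (0:ℝ), Fin n → 𝕜),
    (∀ θ : Set.Icc (-r) (0:ℝ), ψ θ = ∫ s in (t₀ + (θ : ℝ))..(t + (θ : ℝ)), x s) ∧
    x t = ξ + L ψ + G t

open MeasureTheory Set intervalIntegral

section Helpers
variable {E : Type*} [NormedAddCommGroup E] [NormedSpace ℝ E] [CompleteSpace E]

set_option linter.unusedSectionVars false

def LocInt (u : ℝ → E) : Prop := ∀ p q : ℝ, IntervalIntegrable u volume p q


lemma locInt_ite {u v : ℝ → E} (a : ℝ) (hu : LocInt u) (hv : LocInt v) :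
    LocInt (fun s => if s < a then u s else v s) := by
  intro p q
  rw [intervalIntegrable_iff]
  have h1 : IntegrableOn (fun s => if s < a then u s else v s) (uIoc p q ∩ Iio a) := by
    refine (((hu p q).def'.mono_set inter_subset_left).congr_fun ?_
      (measurableSet_uIoc.inter measurableSet_Iio)).mono_set (subset_refl _)
    intro s hs
    simp [Set.mem_Iio.mp hs.2]
  have h2 : IntegrableOn (fun s => if s < a then u s else v s) (uIoc p q ∩ Ici a) := by
    refine ((hv p q).def'.mono_set inter_subset_left).congr_fun ?_
      (measurableSet_uIoc.inter measurableSet_Ici)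
    intro s hs
    simp [not_lt.2 (Set.mem_Ici.mp hs.2)]
  have : uIoc p q = (uIoc p q ∩ Iio a) ∪ (uIoc p q ∩ Ici a) := by
    rw [← inter_union_distrib_left, Iio_union_Ici, inter_univ]
  rw [this]
  exact h1.union h2

lemma bnd {v : ℝ → E} {a c b q m : ℝ} (h1 : IntervalIntegrable v volume a c)
    (h2 : IntervalIntegrable v volume c q)
    (h0 : ∀ s ∈ Icc a c, v s = 0) (hm : ∀ s ∈ Icc c b, ‖v s‖ ≤ m)
    (hac : a ≤ c) (hcb : c ≤ b) (hq : q ∈ Icc a b) :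
    ‖∫ s in a..q, v s‖ ≤ (b - c) * m := by
  have hm0 : 0 ≤ m := le_trans (norm_nonneg _) (hm c ⟨le_refl c, hcb⟩)
  rcases le_or_gt q c with hqc | hqc
  · have : ∫ s in a..q, v s = ∫ s in a..q, (0 : E) := by
      apply intervalIntegral.integral_congr
      intro s hs
      rw [uIcc_of_le hq.1] at hs
      exact h0 s ⟨hs.1, le_trans hs.2 hqc⟩
    rw [this, intervalIntegral.integral_zero, norm_zero]
    exact mul_nonneg (by linarith) hm0
  · have h2' : IntervalIntegrable v volume c q := h2
    have hsplit : ∫ s in a..q, v s = (∫ s in a..c, v s) + ∫ s in c..q, v s :=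
      (intervalIntegral.integral_add_adjacent_intervals h1 h2').symm
    have hz : ∫ s in a..c, v s = 0 := by
      have : ∫ s in a..c, v s = ∫ s in a..c, (0 : E) := by
        apply intervalIntegral.integral_congr
        intro s hs
        rw [uIcc_of_le hac] at hs
        exact h0 s hs
      rw [this, intervalIntegral.integral_zero]
    have hb2 : ‖∫ s in c..q, v s‖ ≤ m * |q - c| := by
      apply intervalIntegral.norm_integral_le_of_norm_le_const
      intro s hs
      rw [uIoc_of_le hqc.le] at hs
      exact hm s ⟨hs.1.le, le_trans hs.2 hq.2⟩
    rw [hsplit, hz, zero_add]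
    calc ‖∫ s in c..q, v s‖ ≤ m * |q - c| := hb2
      _ = (q - c) * m := by rw [abs_of_nonneg (by linarith)]; ring
      _ ≤ (b - c) * m := by nlinarith [hq.2]



noncomputable def Fprim (u : ℝ → E) : ℝ → E := fun s => ∫ σ in (0:ℝ)..s, u σ

lemma Fprim_cont {u : ℝ → E} (hu : LocInt u) : Continuous (Fprim u) :=
  intervalIntegral.continuous_primitive hu 0

lemma integral_eq_Fprim {u : ℝ → E} (hu : LocInt u) (a b : ℝ) :
    ∫ s in a..b, u s = Fprim u b - Fprim u a :=
  (integral_interval_sub_left (hu 0 b) (hu 0 a)).symm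

noncomputable def PsiC (r t₀ : ℝ) (u : ℝ → E) (hu : LocInt u) :
    C(ℝ, C(Icc (-r) (0:ℝ), E)) :=
  ContinuousMap.curry
    ⟨fun p => Fprim u (p.1 + (p.2 : ℝ)) - Fprim u (t₀ + (p.2 : ℝ)), by
      have hc := Fprim_cont hu
      fun_prop⟩

lemma PsiC_apply {r t₀ : ℝ} {u : ℝ → E} (hu : LocInt u) (t : ℝ) (θ : Icc (-r) (0:ℝ)) :
    PsiC r t₀ u hu t θ = ∫ s in (t₀ + (θ:ℝ))..(t + (θ:ℝ)), u s := by
  rw [integral_eq_Fprim hu]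
  rfl


end Helpers

section Main
variable {𝕜 : Type*} [RCLike 𝕜] {n : ℕ} {r : ℝ}
variable (L : C(Icc (-r) (0:ℝ), Fin n → 𝕜) →L[𝕜] (Fin n → 𝕜)) (t₀ : ℝ)
    (φ : ℝ → Fin n → 𝕜) (ξ : Fin n → 𝕜) (G : ℝ → Fin n → 𝕜)

variable {L t₀ φ ξ G} in
def Sol (b : ℝ) (x : ℝ → Fin n → 𝕜) : Prop :=
  (∀ θ ∈ Set.Ico (-r) (0:ℝ), x (t₀ + θ) = φ θ) ∧ x t₀ = ξ ∧
  ContinuousOn x (Set.Icc t₀ b) ∧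
  ∀ t ∈ Set.Icc t₀ b, ∃ ψ : C(Set.Icc (-r) (0:ℝ), Fin n → 𝕜),
    (∀ θ : Set.Icc (-r) (0:ℝ), ψ θ = ∫ s in (t₀ + (θ : ℝ))..(t + (θ : ℝ)), x s) ∧
    x t = ξ + L ψ + G t

noncomputable def histInd (r t₀ : ℝ) (φ : ℝ → Fin n → 𝕜) : ℝ → Fin n → 𝕜 :=
  indicator (Ico (t₀ - r) t₀) (fun s => φ (s - t₀))

variable {φ}

lemma histInd_int (hφ : IntegrableOn φ (Ico (-r) (0:ℝ))) :
    Integrable (histInd r t₀ φ) := by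
  rw [histInd, integrable_indicator_iff measurableSet_Ico]
  have h1 : Integrable (indicator (Ico (-r) (0:ℝ)) φ) :=
    (integrable_indicator_iff measurableSet_Ico).2 hφ
  have h2 := h1.comp_sub_right t₀
  refine (h2.integrableOn).congr_fun ?_ measurableSet_Ico
  intro s hs
  simp only [indicator_of_mem (show s - t₀ ∈ Ico (-r) (0:ℝ) by
    constructor <;> [linarith [hs.1]; linarith [hs.2]])]

lemma histInd_locInt (hφ : IntegrableOn φ (Ico (-r) (0:ℝ))) :
    LocInt (histInd r t₀ φ) := fun _ _ => (histInd_int t₀ hφ).intervalIntegrable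

lemma histInd_eq {s : ℝ} (h1 : t₀ - r ≤ s) (h2 : s < t₀) :
    histInd r t₀ φ s = φ (s - t₀) := by
  have hm : s ∈ Ico (t₀ - r) t₀ := ⟨h1, h2⟩
  exact indicator_of_mem hm _

variable {L ξ G}

lemma sol_mono {b b' x} (hx : Sol (L := L) (t₀ := t₀) (φ := φ) (ξ := ξ) (G := G) b x) (h1 : b' ≤ b) :
    Sol (L := L) (t₀ := t₀) (φ := φ) (ξ := ξ) (G := G) b' x :=
  ⟨hx.1, hx.2.1, hx.2.2.1.mono (Icc_subset_Icc le_rfl h1),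
    fun t ht => hx.2.2.2 t ⟨ht.1, le_trans ht.2 h1⟩⟩

lemma sol_integrableOn (hr : 0 < r) {b x} (hb : t₀ ≤ b)
    (hφ : IntegrableOn φ (Ico (-r) (0:ℝ))) (hx : Sol (L := L) (t₀ := t₀) (φ := φ) (ξ := ξ) (G := G) b x) :
    IntegrableOn x (Icc (t₀ - r) b) := by
  have h1 : IntegrableOn x (Ico (t₀ - r) t₀) := by
    refine ((histInd_int t₀ hφ).integrableOn).congr_fun ?_ measurableSet_Ico
    intro s hs
    have := hx.1 (s - t₀) ⟨by linarith [hs.1], by linarith [hs.2]⟩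
    rw [histInd_eq t₀ hs.1 hs.2]
    have h := this
    rw [show t₀ + (s - t₀) = s by ring] at h
    exact h.symm
  have h2 : IntegrableOn x (Icc t₀ b) := hx.2.2.1.integrableOn_Icc
  have : Icc (t₀ - r) b = Ico (t₀ - r) t₀ ∪ Icc t₀ b :=
    (Ico_union_Icc_eq_Icc (by linarith) hb).symm
  rw [this]
  exact h1.union h2

lemma sol_intervalIntegrable (hr : 0 < r) {b x} (hb : t₀ ≤ b)
    (hφ : IntegrableOn φ (Ico (-r) (0:ℝ))) (hx : Sol (L := L) (t₀ := t₀) (φ := φ) (ξ := ξ) (G := G) b x)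
    {p q : ℝ} (hp : p ∈ Icc (t₀ - r) b) (hq : q ∈ Icc (t₀ - r) b) :
    IntervalIntegrable x volume p q := by
  rw [intervalIntegrable_iff]
  exact (sol_integrableOn t₀ hr hb hφ hx).mono_set
    ((uIoc_subset_uIcc).trans (uIcc_subset_Icc hp hq))

noncomputable def Nrm (r t₀ b : ℝ) (φ : ℝ → Fin n → 𝕜) (x : ℝ → Fin n → 𝕜) :
    ℝ → Fin n → 𝕜 :=
  fun s => if s < t₀ then histInd r t₀ φ s else x (max t₀ (min s b))

lemma clamp_mem {b : ℝ} (hb : t₀ ≤ b) (s : ℝ) : max t₀ (min s b) ∈ Icc t₀ b :=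
  ⟨le_max_left _ _, max_le hb (min_le_right _ _)⟩

lemma nrm_cont_right {b : ℝ} {x : ℝ → Fin n → 𝕜} (hb : t₀ ≤ b)
    (hx : ContinuousOn x (Icc t₀ b)) :
    Continuous (fun s => x (max t₀ (min s b))) :=
  hx.comp_continuous (continuous_const.max (continuous_id.min continuous_const))
    (clamp_mem t₀ hb)

lemma nrm_locInt (hr : 0 < r) {b : ℝ} {x : ℝ → Fin n → 𝕜} (hb : t₀ ≤ b)
    (hφ : IntegrableOn φ (Ico (-r) (0:ℝ))) (hx : ContinuousOn x (Icc t₀ b)) :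
    LocInt (Nrm r t₀ b φ x) :=
  locInt_ite t₀ (histInd_locInt t₀ hφ)
    (fun _ _ => ((nrm_cont_right t₀ hb hx)).intervalIntegrable _ _)

lemma nrm_eq (hr : 0 < r) {b : ℝ} {x : ℝ → Fin n → 𝕜} (hb : t₀ ≤ b)
    (hx : Sol (L := L) (t₀ := t₀) (φ := φ) (ξ := ξ) (G := G) b x) :
    ∀ s ∈ Icc (t₀ - r) b, Nrm r t₀ b φ x s = x s := by
  intro s hs
  rcases lt_or_ge s t₀ with h | h
  · rw [Nrm, if_pos h, histInd_eq t₀ hs.1 h]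
    have := hx.1 (s - t₀) ⟨by linarith [hs.1], by linarith⟩
    rw [show t₀ + (s - t₀) = s by ring] at this
    exact this.symm
  · rw [Nrm, if_neg (not_lt.2 h), min_eq_left hs.2, max_eq_right h]

lemma nrm_sol (hr : 0 < r) {b : ℝ} {x : ℝ → Fin n → 𝕜} (hb : t₀ ≤ b)
    (hx : Sol (L := L) (t₀ := t₀) (φ := φ) (ξ := ξ) (G := G) b x) :
    Sol (L := L) (t₀ := t₀) (φ := φ) (ξ := ξ) (G := G) b (Nrm r t₀ b φ x) := by
  refine ⟨?_, ?_, ?_, ?_⟩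
  · intro θ hθ
    rw [nrm_eq t₀ hr hb hx _ ⟨by linarith [hθ.1], by linarith [hθ.2]⟩]
    exact hx.1 θ hθ
  · rw [nrm_eq t₀ hr hb hx _ ⟨by linarith, hb⟩]; exact hx.2.1
  · exact hx.2.2.1.congr fun s hs =>
      nrm_eq t₀ hr hb hx _ ⟨by linarith [hs.1], hs.2⟩
  · intro t ht
    obtain ⟨ψ, hψ, heq⟩ := hx.2.2.2 t ht
    refine ⟨ψ, fun θ => ?_, ?_⟩
    · rw [hψ θ]
      apply intervalIntegral.integral_congr
      intro s hs
      rw [uIcc_of_le (by linarith [ht.1, θ.2.2] : t₀ + (θ:ℝ) ≤ t + (θ:ℝ))] at hs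
      exact (nrm_eq t₀ hr hb hx s ⟨by linarith [hs.1, θ.2.1], by linarith [hs.2, θ.2.2, ht.2]⟩).symm
    · rw [nrm_eq t₀ hr hb hx t ⟨by linarith [ht.1], ht.2⟩]; exact heq

variable (L ξ G) in
lemma sol_base (hr : 0 < r) (hG0 : G t₀ = 0) :
    Sol (L := L) (t₀ := t₀) (φ := φ) (ξ := ξ) (G := G) t₀
      (fun s => if s < t₀ then histInd r t₀ φ s else ξ) := by
  refine ⟨?_, ?_, ?_, ?_⟩
  · intro θ hθ
    have h1 : t₀ + θ < t₀ := by linarith [hθ.2]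
    simp only [if_pos h1]
    rw [histInd_eq t₀ (by linarith [hθ.1]) h1]
    congr 1; ring
  · simp
  · have heq : EqOn (fun s => if s < t₀ then histInd r t₀ φ s else ξ)
        (fun _ => ξ) (Icc t₀ t₀) := by
      intro s hs
      rw [Icc_self, mem_singleton_iff] at hs
      simp [hs]
    exact continuousOn_const.congr heq
  · intro t ht
    have htt : t = t₀ := le_antisymm ht.2 ht.1
    subst htt
    refine ⟨0, fun θ => ?_, ?_⟩
    · rw [ContinuousMap.zero_apply, intervalIntegral.integral_same]
    · simp [hG0]

lemma sol_uniq (hr : 0 < r) {b : ℝ} {x x' : ℝ → Fin n → 𝕜} (hb : t₀ ≤ b)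
    (hφ : IntegrableOn φ (Ico (-r) (0:ℝ)))
    (hx : Sol (L := L) (t₀ := t₀) (φ := φ) (ξ := ξ) (G := G) b x)
    (hx' : Sol (L := L) (t₀ := t₀) (φ := φ) (ξ := ξ) (G := G) b x') :
    ∀ s ∈ Icc (t₀ - r) b, x s = x' s := by
  set τ : ℝ := (2 * (‖L‖ + 1))⁻¹ with hτdef
  have hτpos : 0 < τ := by positivity
  have hLτ : ‖L‖ * τ ≤ 1 / 2 := by
    rw [hτdef, inv_eq_one_div, mul_one_div, div_le_div_iff₀ (by positivity) two_pos]
    nlinarith [norm_nonneg L]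
  have hist : ∀ u ∈ Ico (t₀ - r) t₀, x u = x' u := by
    intro u hu
    have h1 := hx.1 (u - t₀) ⟨by linarith [hu.1], by linarith [hu.2]⟩
    have h2 := hx'.1 (u - t₀) ⟨by linarith [hu.1], by linarith [hu.2]⟩
    rw [show t₀ + (u - t₀) = u by ring] at h1 h2
    rw [h1, h2]
  have key : ∀ k : ℕ, ∀ s ∈ Icc t₀ (min b (t₀ + k * τ)), x s = x' s := by
    intro k
    induction k with
    | zero =>
      intro s hs
      simp only [Nat.cast_zero, zero_mul, add_zero, min_eq_right hb] at hs
      have hst : s = t₀ := le_antisymm hs.2 hs.1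
      rw [hst, hx.2.1, hx'.2.1]
    | succ k ih =>
      intro s hs
      set c := min b (t₀ + k * τ) with hc
      set c' := min b (t₀ + (k + 1 : ℕ) * τ) with hc'
      have hkτ : (0:ℝ) ≤ k * τ := by positivity
      have hc0 : t₀ ≤ c := le_min hb (by linarith)
      have hcc' : c ≤ c' := min_le_min le_rfl (by push_cast; nlinarith)
      have hc'b : c' ≤ b := min_le_left _ _
      have hgap : c' - c ≤ τ := by
        rcases le_total b (t₀ + k * τ) with h | h
        · have e1 : c = b := min_eq_left h
          have e2 : c' = b := min_eq_left (by push_cast; nlinarith)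
          rw [e1, e2]; linarith
        · have e1 : c = t₀ + k * τ := min_eq_right h
          have e2 : c' ≤ t₀ + (k + 1 : ℕ) * τ := min_le_right _ _
          rw [e1]; push_cast at e2 ⊢; nlinarith
      have hzero : ∀ u ∈ Icc (t₀ - r) c, x u = x' u := by
        intro u hu
        rcases lt_or_ge u t₀ with h | h
        · exact hist u ⟨hu.1, h⟩
        · exact ih u ⟨h, hu.2⟩
      have hSne : (Icc t₀ c').Nonempty := nonempty_Icc.2 (le_trans hc0 hcc')
      have hcont : ContinuousOn (fun u => ‖x u - x' u‖) (Icc t₀ c') :=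
        ((hx.2.2.1.mono (Icc_subset_Icc le_rfl hc'b)).sub
          (hx'.2.2.1.mono (Icc_subset_Icc le_rfl hc'b))).norm
      obtain ⟨tm, htm, hmax⟩ := isCompact_Icc.exists_isMaxOn hSne hcont
      set m := ‖x tm - x' tm‖ with hm
      have hm0 : 0 ≤ m := norm_nonneg _
      have hintv : ∀ p q : ℝ, p ∈ Icc (t₀ - r) b → q ∈ Icc (t₀ - r) b →
          IntervalIntegrable (fun u => x u - x' u) volume p q := fun p q hp hq =>
        (sol_intervalIntegrable t₀ hr hb hφ hx hp hq).sub
          (sol_intervalIntegrable t₀ hr hb hφ hx' hp hq)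
      have hbound : m ≤ 1 / 2 * m := by
        have htmIcc : tm ∈ Icc t₀ b := ⟨htm.1, le_trans htm.2 hc'b⟩
        obtain ⟨ψ, hψ, heq⟩ := hx.2.2.2 tm htmIcc
        obtain ⟨ψ', hψ', heq'⟩ := hx'.2.2.2 tm htmIcc
        have hdiff : x tm - x' tm = L (ψ - ψ') := by
          rw [heq, heq', map_sub]; abel
        have hψb : ‖ψ - ψ'‖ ≤ τ * m := by
          rw [ContinuousMap.norm_le _ (by positivity)]
          intro θ
          rw [ContinuousMap.sub_apply, hψ θ, hψ' θ]
          have hθ1 : -r ≤ (θ:ℝ) := θ.2.1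
          have hθ2 : (θ:ℝ) ≤ 0 := θ.2.2
          rw [← intervalIntegral.integral_sub
            (sol_intervalIntegrable t₀ hr hb hφ hx ⟨by linarith, by linarith⟩
              ⟨by linarith [htm.1], by linarith [htm.2, hc'b]⟩)
            (sol_intervalIntegrable t₀ hr hb hφ hx' ⟨by linarith, by linarith⟩
              ⟨by linarith [htm.1], by linarith [htm.2, hc'b]⟩)]
          have hB := bnd (v := fun u => x u - x' u) (a := t₀ + (θ:ℝ)) (c := c)
            (b := c') (q := tm + (θ:ℝ)) (m := m)
            (hintv _ _ ⟨by linarith, by linarith⟩ ⟨by linarith, hc'b.trans' hcc' |>.trans le_rfl⟩)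
            (hintv _ _ ⟨by linarith [hc0], le_trans hcc' hc'b⟩
              ⟨by linarith [htm.1], by linarith [htm.2, hc'b]⟩)
            (fun u hu => sub_eq_zero.2 (hzero u ⟨by linarith [hu.1], hu.2⟩))
            (fun u hu => hmax ⟨le_trans hc0 hu.1, hu.2⟩)
            (by linarith) hcc' ⟨by linarith [htm.1], by linarith [htm.2]⟩
          calc ‖∫ u in (t₀ + (θ:ℝ))..(tm + (θ:ℝ)), (x u - x' u)‖ ≤ (c' - c) * m := hB
            _ ≤ τ * m := by nlinarith
        calc m = ‖L (ψ - ψ')‖ := by rw [← hdiff]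
          _ ≤ ‖L‖ * ‖ψ - ψ'‖ := L.le_opNorm _
          _ ≤ ‖L‖ * (τ * m) := by nlinarith [norm_nonneg L]
          _ ≤ 1 / 2 * m := by nlinarith
      have hmz : m = 0 := by linarith
      have hsle : ‖x s - x' s‖ ≤ m := hmax hs
      rw [hmz] at hsle
      exact sub_eq_zero.1 (norm_le_zero_iff.1 hsle)
  intro s hs
  rcases lt_or_ge s t₀ with h | h
  · exact hist s ⟨hs.1, h⟩
  · obtain ⟨k, hk⟩ := exists_nat_ge ((b - t₀) / τ)
    have hkb : b ≤ t₀ + k * τ := by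
      rw [div_le_iff₀ hτpos] at hk; linarith
    exact key k s ⟨h, by rw [min_eq_left hkb]; exact hs.2⟩

lemma sol_step (hr : 0 < r) (hGc : ContinuousOn G (Ici t₀)) {c c' : ℝ}
    (hc : t₀ ≤ c) (hcc' : c ≤ c') (hgap : ‖L‖ * (c' - c) ≤ 1 / 2)
    (hφ : IntegrableOn φ (Ico (-r) (0:ℝ))) {x : ℝ → Fin n → 𝕜}
    (hx : Sol (L := L) (t₀ := t₀) (φ := φ) (ξ := ξ) (G := G) c x) :
    ∃ z, Sol (L := L) (t₀ := t₀) (φ := φ) (ξ := ξ) (G := G) c' z := by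
  classical
  set y0 : ℝ → Fin n → 𝕜 := Nrm r t₀ c φ x with hy0def
  have hy0sol : Sol (L := L) (t₀ := t₀) (φ := φ) (ξ := ξ) (G := G) c y0 :=
    nrm_sol t₀ hr hc hx
  have hy0loc : LocInt y0 := nrm_locInt t₀ hr hc hφ hx.2.2.1
  have hy0above : ∀ s, t₀ ≤ s → y0 s = x (max t₀ (min s c)) := fun s hs => by
    rw [hy0def, Nrm, if_neg (not_lt.2 hs)]
  have hy0contR : Continuous (fun s => x (max t₀ (min s c))) :=
    nrm_cont_right t₀ hc hx.2.2.1
  have hcmem : c ∈ Icc c c' := left_mem_Icc.2 hcc'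
  -- the glue map
  set g : C(Icc c c', Fin n → 𝕜) → ℝ → Fin n → 𝕜 :=
    fun y s => if s < c then y0 s else IccExtend hcc' y s with hgdef
  have hgloc : ∀ y, LocInt (g y) := fun y =>
    locInt_ite c hy0loc (fun _ _ => (y.continuous.Icc_extend').intervalIntegrable _ _)
  have hgeq : ∀ (y : C(Icc c c', Fin n → 𝕜)), y ⟨c, hcmem⟩ = y0 c →
      ∀ s, s ≤ c → g y s = y0 s := by
    intro y hyc s hs
    rcases lt_or_eq_of_le hs with h | h
    · simp only [hgdef]; rw [if_pos h]
    · subst h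
      simp only [hgdef]
      rw [if_neg (lt_irrefl s), IccExtend_of_mem hcc' _ hcmem, hyc]
  -- continuity of the integral operator
  have hGcont : Continuous (fun t : Icc c c' => G t) :=
    hGc.comp_continuous continuous_subtype_val (fun t => le_trans hc t.2.1)
  -- the subtype
  set A := {y : C(Icc c c', Fin n → 𝕜) // y ⟨c, hcmem⟩ = y0 c} with hAdef
  haveI hAne : Nonempty A := ⟨⟨ContinuousMap.const _ (y0 c), rfl⟩⟩
  haveI hAcomp : CompleteSpace A :=
    IsClosed.completeSpace_coe (hs := isClosed_eq (continuous_eval_const _) continuous_const)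
  -- the Picard operator
  have hΦcont : ∀ y : A, Continuous (fun t : Icc c c' =>
      ξ + L (PsiC r t₀ (g ↑y) (hgloc ↑y) t) + G t) := fun y =>
    (continuous_const.add (L.continuous.comp
      ((PsiC r t₀ (g ↑y) (hgloc ↑y)).continuous.comp continuous_subtype_val))).add hGcont
  have hΦmem : ∀ y : A, (ξ + L (PsiC r t₀ (g ↑y) (hgloc ↑y) c) + G c) = y0 c := by
    intro y
    obtain ⟨ψ, hψ, heq⟩ := hy0sol.2.2.2 c ⟨hc, le_rfl⟩
    have hΨeq : PsiC r t₀ (g ↑y) (hgloc ↑y) c = ψ := by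
      refine ContinuousMap.ext fun θ => ?_
      rw [PsiC_apply, hψ θ]
      apply intervalIntegral.integral_congr
      intro s hs
      rw [uIcc_of_le (by linarith [θ.2.2] : t₀ + (θ:ℝ) ≤ c + (θ:ℝ))] at hs
      exact hgeq ↑y y.2 s (by linarith [hs.2, θ.2.2])
    rw [hΨeq, ← heq]
  set Φ : A → A := fun y =>
    ⟨⟨fun t => ξ + L (PsiC r t₀ (g ↑y) (hgloc ↑y) t) + G t, hΦcont y⟩, hΦmem y⟩ with hΦdef
  -- contraction
  have hcontr : ∀ y y' : A, dist (Φ y) (Φ y') ≤ 1 / 2 * dist y y' := by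
    intro y y'
    rw [Subtype.dist_eq, ContinuousMap.dist_le (by positivity)]
    intro t
    have htc : c ≤ (t:ℝ) := t.2.1
    have htc' : (t:ℝ) ≤ c' := t.2.2
    show dist (ξ + L (PsiC r t₀ (g ↑y) (hgloc ↑y) t) + G t)
      (ξ + L (PsiC r t₀ (g ↑y') (hgloc ↑y') t) + G t) ≤ 1 / 2 * dist y y'
    rw [dist_eq_norm, show (ξ + L (PsiC r t₀ (g ↑y) (hgloc ↑y) t) + G t)
        - (ξ + L (PsiC r t₀ (g ↑y') (hgloc ↑y') t) + G t)
        = L (PsiC r t₀ (g ↑y) (hgloc ↑y) t - PsiC r t₀ (g ↑y') (hgloc ↑y') t) by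
      rw [map_sub]; abel]
    have hψb : ‖PsiC r t₀ (g ↑y) (hgloc ↑y) t - PsiC r t₀ (g ↑y') (hgloc ↑y') t‖
        ≤ (c' - c) * dist y y' := by
      rw [ContinuousMap.norm_le _ (mul_nonneg (by linarith) dist_nonneg)]
      intro θ
      have hθ1 : -r ≤ (θ:ℝ) := θ.2.1
      have hθ2 : (θ:ℝ) ≤ 0 := θ.2.2
      rw [ContinuousMap.sub_apply, PsiC_apply, PsiC_apply,
        ← intervalIntegral.integral_sub (hgloc ↑y _ _) (hgloc ↑y' _ _)]
      refine bnd ((hgloc ↑y _ _).sub (hgloc ↑y' _ _)) ((hgloc ↑y _ _).sub (hgloc ↑y' _ _))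
        ?_ ?_ (by linarith) hcc' ⟨by linarith, by linarith⟩
      · intro u hu
        rw [hgeq ↑y y.2 u hu.2, hgeq ↑y' y'.2 u hu.2, sub_self]
      · intro u hu
        have h1 : ¬ u < c := not_lt.2 hu.1
        simp only [hgdef]
        rw [if_neg h1, if_neg h1, IccExtend_of_mem hcc' _ hu, IccExtend_of_mem hcc' _ hu,
          ← dist_eq_norm]
        exact le_trans (ContinuousMap.dist_apply_le_dist _) (le_of_eq (Subtype.dist_eq y y').symm)
    calc ‖L (PsiC r t₀ (g ↑y) (hgloc ↑y) t - PsiC r t₀ (g ↑y') (hgloc ↑y') t)‖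
        ≤ ‖L‖ * ‖PsiC r t₀ (g ↑y) (hgloc ↑y) t - PsiC r t₀ (g ↑y') (hgloc ↑y') t‖ :=
          L.le_opNorm _
      _ ≤ ‖L‖ * ((c' - c) * dist y y') := by
          have := norm_nonneg L
          nlinarith [dist_nonneg (x := y) (y := y')]
      _ ≤ 1 / 2 * dist y y' := by
          have h2 : 0 ≤ dist y y' := dist_nonneg
          nlinarith
  have hlip : LipschitzWith (1/2 : NNReal) Φ := by
    apply LipschitzWith.of_dist_le_mul
    intro y y'
    have := hcontr y y'
    rwa [show ((1/2 : NNReal) : ℝ) = 1 / 2 by norm_num]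
  have hcontracting : ContractingWith (1/2 : NNReal) Φ := ⟨one_half_lt_one, hlip⟩
  set ystar : A := ContractingWith.fixedPoint Φ hcontracting with hystar
  have hfix : Φ ystar = ystar := hcontracting.fixedPoint_isFixedPt
  have hfixval : ∀ t : Icc c c', (ystar : C(Icc c c', Fin n → 𝕜)) t
      = ξ + L (PsiC r t₀ (g ↑ystar) (hgloc ↑ystar) t) + G t := by
    intro t
    conv_lhs => rw [← hfix]
    rfl
  refine ⟨g ↑ystar, ?_, ?_, ?_, ?_⟩
  · intro θ hθ
    rw [hgeq ↑ystar ystar.2 _ (by linarith [hθ.2])]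
    exact hy0sol.1 θ hθ
  · rw [hgeq ↑ystar ystar.2 _ hc]
    exact hy0sol.2.1
  · -- continuity on Icc t₀ c'
    set w : ℝ → Fin n → 𝕜 := fun s =>
      if s ≤ c then x (max t₀ (min s c)) else IccExtend hcc' (↑ystar) s with hwdef
    have hw : Continuous w := by
      apply Continuous.if_le hy0contR (ystar : C(Icc c c', Fin n → 𝕜)).continuous.Icc_extend'
        continuous_id continuous_const
      intro s hs
      obtain rfl : s = c := hs
      rw [min_self, max_eq_right hc, IccExtend_of_mem hcc' _ hcmem, ystar.2, hy0above s hc,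
        min_self, max_eq_right hc]
    apply hw.continuousOn.congr
    intro s hs
    rcases lt_or_ge s c with h | h
    · simp only [hgdef, hwdef]
      rw [if_pos h, if_pos h.le, hy0above s hs.1]
    · rcases eq_or_lt_of_le h with h2 | h2
      · obtain rfl : s = c := h2.symm
        simp only [hgdef, hwdef]
        rw [if_neg (lt_irrefl s), if_pos le_rfl, IccExtend_of_mem hcc' _ hcmem, ystar.2,
          hy0above s hs.1, min_self, max_eq_right hc]
      · simp only [hgdef, hwdef]
        rw [if_neg (not_lt.2 h), if_neg (not_le.2 h2)]
  · -- the equation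
    intro t ht
    rcases le_or_gt t c with h | h
    · obtain ⟨ψ, hψ, heq⟩ := hy0sol.2.2.2 t ⟨ht.1, h⟩
      refine ⟨ψ, fun θ => ?_, ?_⟩
      · rw [hψ θ]
        apply intervalIntegral.integral_congr
        intro s hs
        rw [uIcc_of_le (by linarith [θ.2.2, ht.1] : t₀ + (θ:ℝ) ≤ t + (θ:ℝ))] at hs
        exact (hgeq ↑ystar ystar.2 s (by linarith [hs.2, θ.2.2])).symm
      · rw [hgeq ↑ystar ystar.2 t h]
        exact heq
    · refine ⟨PsiC r t₀ (g ↑ystar) (hgloc ↑ystar) t, fun θ => PsiC_apply _ _ _, ?_⟩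
      have hmem : t ∈ Icc c c' := ⟨h.le, ht.2⟩
      have : g ↑ystar t = (ystar : C(Icc c c', Fin n → 𝕜)) ⟨t, hmem⟩ := by
        simp only [hgdef]
        rw [if_neg (not_lt.2 h.le), IccExtend_of_mem hcc' _ hmem]
      rw [this, hfixval ⟨t, hmem⟩]

lemma sol_exists (hr : 0 < r) (hGc : ContinuousOn G (Ici t₀)) (hG0 : G t₀ = 0)
    (hφ : IntegrableOn φ (Ico (-r) (0:ℝ))) {b : ℝ} (hb : t₀ ≤ b) :
    ∃ x, Sol (L := L) (t₀ := t₀) (φ := φ) (ξ := ξ) (G := G) b x := by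
  set τ : ℝ := (2 * (‖L‖ + 1))⁻¹ with hτdef
  have hτpos : 0 < τ := by positivity
  have hLτ : ‖L‖ * τ ≤ 1 / 2 := by
    rw [hτdef, inv_eq_one_div, mul_one_div, div_le_div_iff₀ (by positivity) two_pos]
    nlinarith [norm_nonneg L]
  have key : ∀ k : ℕ, ∃ x, Sol (L := L) (t₀ := t₀) (φ := φ) (ξ := ξ) (G := G)
      (min b (t₀ + k * τ)) x := by
    intro k
    induction k with
    | zero =>
      simp only [Nat.cast_zero, zero_mul, add_zero, min_eq_right hb]
      exact ⟨_, sol_base L t₀ ξ G hr hG0⟩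
    | succ k ih =>
      obtain ⟨x, hx⟩ := ih
      have hkτ : (0:ℝ) ≤ k * τ := by positivity
      have hc0 : t₀ ≤ min b (t₀ + k * τ) := le_min hb (by linarith)
      have hcc' : min b (t₀ + k * τ) ≤ min b (t₀ + (k + 1 : ℕ) * τ) :=
        min_le_min le_rfl (by push_cast; nlinarith)
      have hd : min b (t₀ + (k + 1 : ℕ) * τ) - min b (t₀ + k * τ) ≤ τ := by
        rcases le_total b (t₀ + k * τ) with h | h
        · have e1 : min b (t₀ + k * τ) = b := min_eq_left h
          have e2 : min b (t₀ + (k + 1 : ℕ) * τ) = b := min_eq_left (by push_cast; nlinarith)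
          rw [e1, e2]; linarith
        · have e1 : min b (t₀ + k * τ) = t₀ + k * τ := min_eq_right h
          have e2 : min b (t₀ + (k + 1 : ℕ) * τ) ≤ t₀ + (k + 1 : ℕ) * τ := min_le_right _ _
          rw [e1]; push_cast at e2 ⊢; nlinarith
      have hgap : ‖L‖ * (min b (t₀ + (k + 1 : ℕ) * τ) - min b (t₀ + k * τ)) ≤ 1 / 2 := by
        have h0 : (0:ℝ) ≤ min b (t₀ + (k + 1 : ℕ) * τ) - min b (t₀ + k * τ) :=
          sub_nonneg.2 hcc'
        nlinarith [norm_nonneg L]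
      exact sol_step t₀ hr hGc hc0 hcc' hgap hφ hx
  obtain ⟨k, hk⟩ := exists_nat_ge ((b - t₀) / τ)
  obtain ⟨x, hx⟩ := key k
  rw [min_eq_left (by rw [div_le_iff₀ hτpos] at hk; linarith)] at hx
  exact ⟨x, hx⟩

end Main

/-- Existence and uniqueness of the solution of the integral equation with continuous
forcing term `G` (with `G(t₀) = 0`) and `M¹` initial datum `(φ, ξ)` at initial time `t₀`. -/
theorem stmt_6 {𝕜 : Type*} [RCLike 𝕜] {n : ℕ} (hn : 0 < n) {r : ℝ} (hr : 0 < r)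
    (L : C(Set.Icc (-r) (0:ℝ), Fin n → 𝕜) →L[𝕜] (Fin n → 𝕜))
    (t₀ : ℝ) (ht₀ : 0 ≤ t₀)
    (G : ℝ → Fin n → 𝕜) (hGc : ContinuousOn G (Set.Ici t₀)) (hG0 : G t₀ = 0)
    (φ : ℝ → Fin n → 𝕜) (ξ : Fin n → 𝕜)
    (hφ : IntegrableOn φ (Set.Ico (-r) (0:ℝ))) :
    ∃ x : ℝ → Fin n → 𝕜, IsSolFrom r L t₀ φ ξ G x ∧
      ∀ x' : ℝ → Fin n → 𝕜, IsSolFrom r L t₀ φ ξ G x' →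
        ∀ t, t₀ - r ≤ t → x' t = x t := by
  classical
  have hex : ∀ b : ℝ, ∃ y, Sol (L := L) (t₀ := t₀) (φ := φ) (ξ := ξ) (G := G)
      (max b (t₀ + 1)) y :=
    fun b => sol_exists t₀ hr hGc hG0 hφ (le_max_of_le_right (by linarith))
  choose Y hY using hex
  have hagree : ∀ b₁ b₂ : ℝ, ∀ s ∈ Icc (t₀ - r) (min (max b₁ (t₀ + 1)) (max b₂ (t₀ + 1))),
      Y b₁ s = Y b₂ s := by
    intro b₁ b₂ s hs
    have h1 := sol_mono t₀ (hY b₁) (min_le_left (max b₁ (t₀ + 1)) (max b₂ (t₀ + 1)))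
    have h2 := sol_mono t₀ (hY b₂) (min_le_right (max b₁ (t₀ + 1)) (max b₂ (t₀ + 1)))
    exact sol_uniq t₀ hr (le_min (le_max_of_le_right (by linarith))
      (le_max_of_le_right (by linarith))) hφ h1 h2 s hs
  set x : ℝ → Fin n → 𝕜 := fun s => if s < t₀ then histInd r t₀ φ s else Y s s with hxdef
  have hxeq : ∀ b : ℝ, ∀ s ∈ Icc (t₀ - r) (max b (t₀ + 1)), x s = Y b s := by
    intro b s hs
    rcases lt_or_ge s t₀ with h | h
    · rw [hxdef]
      simp only [if_pos h]
      rw [histInd_eq t₀ hs.1 h]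
      have h1 := (hY b).1 (s - t₀) ⟨by linarith [hs.1], by linarith⟩
      rw [show t₀ + (s - t₀) = s by ring] at h1
      exact h1.symm
    · rw [hxdef]
      simp only [if_neg (not_lt.2 h)]
      exact hagree s b s ⟨hs.1, le_min (le_max_left _ _) hs.2⟩
  refine ⟨x, ⟨?_, ?_, ?_, ?_⟩, ?_⟩
  · intro θ hθ
    rw [hxdef]
    simp only [if_pos (show t₀ + θ < t₀ by linarith [hθ.2])]
    rw [histInd_eq t₀ (by linarith [hθ.1]) (by linarith [hθ.2])]
    congr 1; ring
  · rw [hxeq t₀ t₀ ⟨by linarith, le_max_of_le_right (by linarith)⟩]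
    exact (hY t₀).2.1
  · intro t ht
    have htI : t₀ ≤ t := ht
    have hmem : Icc t₀ (t + 1) ∈ nhdsWithin t (Ici t₀) := by
      rw [← Ici_inter_Iic]
      exact inter_mem_nhdsWithin _ (Iic_mem_nhds (by linarith))
    have hcont : ContinuousOn x (Icc t₀ (t + 1)) := by
      apply ((hY (t + 1)).2.2.1.mono (Icc_subset_Icc le_rfl (le_max_left _ _))).congr
      intro s hs
      exact hxeq (t + 1) s ⟨by linarith [hs.1], le_trans hs.2 (le_max_left _ _)⟩
    exact (hcont t ⟨htI, by linarith⟩).mono_of_mem_nhdsWithin hmem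
  · intro t ht
    obtain ⟨ψ, hψ, heq⟩ := (hY (t + 1)).2.2.2 t ⟨ht, le_max_of_le_left (by linarith)⟩
    refine ⟨ψ, fun θ => ?_, ?_⟩
    · rw [hψ θ]
      apply intervalIntegral.integral_congr
      intro s hs
      have hθ1 : -r ≤ (θ:ℝ) := θ.2.1
      have hθ2 : (θ:ℝ) ≤ 0 := θ.2.2
      rw [uIcc_of_le (by linarith : t₀ + (θ:ℝ) ≤ t + (θ:ℝ))] at hs
      exact (hxeq (t + 1) s ⟨by linarith [hs.1], le_max_of_le_left (by linarith [hs.2])⟩).symm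
    · rw [hxeq (t + 1) t ⟨by linarith, le_max_of_le_left (by linarith)⟩]
      exact heq
  · intro x' hx' t htr
    rcases lt_or_ge t t₀ with h | h
    · have h1 := hx'.1 (t - t₀) ⟨by linarith, by linarith⟩
      rw [show t₀ + (t - t₀) = t by ring] at h1
      rw [h1, hxdef]
      simp only [if_pos h]
      rw [histInd_eq t₀ htr h]
    · have hx'sol : Sol (L := L) (t₀ := t₀) (φ := φ) (ξ := ξ) (G := G)
          (max (t + 1) (t₀ + 1)) x' :=
        ⟨hx'.1, hx'.2.1, hx'.2.2.1.mono Icc_subset_Ici_self,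
          fun u hu => hx'.2.2.2 u hu.1⟩
      have h2 := sol_uniq t₀ hr (le_max_of_le_right (by linarith)) hφ hx'sol (hY (t + 1)) t
        ⟨by linarith, le_max_of_le_left (by linarith)⟩
      rw [h2, ← hxeq (t + 1) t ⟨by linarith, le_max_of_le_left (by linarith)⟩]
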